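/- arXiv:2007.07870 — 3 statements merged into one kernel-verified Lean document; each statement's English description precedes it below -/
import Mathlib

section
/- For all x ∈ [0,1] and all k ∈ ℂ \ {0}, the Jost solution satisfies the integral equation f₊(x,k) = e^{ixk} − ∫ₓ¹ ( sin(k(x−t))/k )·q(t)·f₊(t,k) dt. -/
open MeasureTheory Set

noncomputable section

/-- `y` solves `-y'' + q y = E y` on `[0,∞)`: `y` is continuously differentiable with
derivative `y'`, `y'` is absolutely continuous (an indefinite integral of a locally
integrable `y''`), and the equation holds for a.e. `x ≥ 0`. -/
def SchrodingerSol (q : ℝ → ℂ) (E : ℂ) (y y' : ℝ → ℂ) : Prop :=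
  (∀ x : ℝ, 0 ≤ x → HasDerivAt y (y' x) x) ∧
  ∃ y'' : ℝ → ℂ,
    (∀ X : ℝ, IntegrableOn y'' (Icc 0 X)) ∧
    (∀ x : ℝ, 0 ≤ x → y' x = y' 0 + ∫ t in (0:ℝ)..x, y'' t) ∧
    (∀ᵐ x : ℝ, 0 ≤ x → -y'' x + q x * y x = E * y x)

/-- The Jost solution `f₊(·,k)` (with derivative `f'`): it solves
`-y'' + q y = k² y` and equals `e^{ikx}` for `x ≥ 1`. -/
def IsJost (q : ℝ → ℂ) (k : ℂ) (f f' : ℝ → ℂ) : Prop :=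
  SchrodingerSol q (k ^ 2) f f' ∧
  ∀ x : ℝ, 1 ≤ x → f x = Complex.exp (Complex.I * k * (x : ℂ))

/-- The fundamental solution `φ(·,k)` (with derivative `y'`): it solves
`-y'' + q y = k² y` with `y(0) = 0`, `y'(0) = 1`. -/
def IsPhi (q : ℝ → ℂ) (k : ℂ) (y y' : ℝ → ℂ) : Prop :=
  SchrodingerSol q (k ^ 2) y y' ∧ y 0 = 0 ∧ y' 0 = 1

/-!
The integral equation is the Lagrange identity `∫ₐᵇ (s y'' - s'' y) = [s y' - s' y]ₐᵇ` applied
to the Jost solution `y = f₊` and the free solution `s(t) = sin(k(x - t))/k` of `-s'' = k² s`.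
Since `q f₊ = f₊'' + k² f₊` a.e., the left side is `∫ₓ¹ s q f₊`; at `t = x` we have `s = 0`,
`s' = -1`, so the bracket there is `-f₊(x)`, while at `t = 1` the values `f₊(1) = e^{ik}`,
`f₊'(1) = ik e^{ik}` make it `e^{ikx}`. As `f₊'` is only absolutely continuous, the integration
by parts against `f₊''` goes through Fubini on the triangle `a ≤ u ≤ t ≤ b`.
-/

section

variable {𝕜 : Type*} [RCLike 𝕜] {a b : ℝ}

theorem integral_mul_integral_eq_integral_integral_mul (hab : a ≤ b) {g h : ℝ → 𝕜}
    (hg : IntegrableOn g (Ioc a b)) (hh : IntegrableOn h (Ioc a b)) :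
    ∫ t in a..b, h t * ∫ u in a..t, g u = ∫ u in a..b, (∫ t in u..b, h t) * g u := by
  set ν := volume.restrict (Ioc a b)
  set F : ℝ → ℝ → 𝕜 := fun t u => {p : ℝ × ℝ | p.2 ≤ p.1}.indicator (fun p => h p.1 * g p.2) (t, u)
  have hF : Integrable (Function.uncurry F) (ν.prod ν) :=
    (hh.mul_prod hg).indicator (measurableSet_le measurable_snd measurable_fst)
  calc ∫ t in a..b, h t * ∫ u in a..t, g u
      = ∫ t, ∫ u, F t u ∂ν ∂ν := by
        rw [intervalIntegral.integral_of_le hab]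
        refine setIntegral_congr_fun measurableSet_Ioc fun t ht => ?_
        have hFt : F t = fun u => h t * (Iic t).indicator g u := by
          funext u; by_cases hut : u ≤ t <;> simp [F, indicator_apply, hut]
        have hIoc : Iic t ∩ Ioc a b = Ioc a t := by
          ext u; simp only [mem_inter_iff, mem_Iic, mem_Ioc]
          exact ⟨fun ⟨h1, h2, _⟩ => ⟨h2, h1⟩, fun ⟨h1, h2⟩ => ⟨h2, h1, h2.trans ht.2⟩⟩
        rw [hFt, integral_const_mul, integral_indicator measurableSet_Iic,
          Measure.restrict_restrict measurableSet_Iic, hIoc,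
          ← intervalIntegral.integral_of_le ht.1.le]
    _ = ∫ u, ∫ t, F t u ∂ν ∂ν := integral_integral_swap hF
    _ = ∫ u in a..b, (∫ t in u..b, h t) * g u := by
        rw [intervalIntegral.integral_of_le hab]
        refine setIntegral_congr_fun measurableSet_Ioc fun u hu => ?_
        have hFu : (fun t => F t u) = fun t => (Ici u).indicator h t * g u := by
          funext t; by_cases hut : u ≤ t <;> simp [F, indicator_apply, hut]
        have hIcc : Ici u ∩ Ioc a b = Icc u b := by
          ext t; simp only [mem_inter_iff, mem_Ici, mem_Ioc, mem_Icc]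
          exact ⟨fun ⟨h1, _, h3⟩ => ⟨h1, h3⟩, fun ⟨h1, h2⟩ => ⟨h1, hu.1.trans_le h1, h2⟩⟩
        rw [hFu, integral_mul_const, integral_indicator measurableSet_Ici,
          Measure.restrict_restrict measurableSet_Ici, hIcc, integral_Icc_eq_integral_Ioc,
          ← intervalIntegral.integral_of_le hu.2]

theorem integral_mul_deriv_eq_deriv_mul_of_eq_add_integral (hab : a ≤ b) {s s' φ g : ℝ → 𝕜}
    (hs : ∀ t ∈ Icc a b, HasDerivAt s (s' t) t) (hs' : IntervalIntegrable s' volume a b)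
    (hg : IntegrableOn g (Ioc a b)) (hφ : ∀ t ∈ Icc a b, φ t = φ a + ∫ u in a..t, g u) :
    ∫ t in a..b, s t * g t = s b * φ b - s a * φ a - ∫ t in a..b, s' t * φ t := by
  have hgi : IntervalIntegrable g volume a b :=
    (intervalIntegrable_iff_integrableOn_Ioc_of_le hab).2 hg
  have hsg : IntervalIntegrable (fun t => s t * g t) volume a b :=
    hgi.continuousOn_mul (by rw [uIcc_of_le hab]; exact HasDerivAt.continuousOn hs)
  have hprim : ContinuousOn (fun t => ∫ u in a..t, g u) (Icc a b) := by
    simpa only [uIcc_of_le hab] using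
      intervalIntegral.continuousOn_primitive_interval' hgi left_mem_uIcc
  have hs'_int : ∀ u ∈ Icc a b, ∫ t in u..b, s' t = s b - s u := fun u hu =>
    intervalIntegral.integral_eq_sub_of_hasDerivAt
      (fun t ht => hs t (by rw [uIcc_of_le hu.2] at ht; exact ⟨hu.1.trans ht.1, ht.2⟩))
      (hs'.mono_set (by rw [uIcc_of_le hu.2, uIcc_of_le hab]; exact Icc_subset_Icc_left hu.1))
  have hφb : ∫ u in a..b, g u = φ b - φ a := by
    rw [hφ b (right_mem_Icc.2 hab)]; ring
  have hsplit : ∫ u in a..b, (s b - s u) * g u = s b * (φ b - φ a) - ∫ t in a..b, s t * g t := by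
    simp_rw [sub_mul]
    rw [intervalIntegral.integral_sub (hgi.const_mul _) hsg, intervalIntegral.integral_const_mul,
      hφb]
  calc ∫ t in a..b, s t * g t
      = s b * (φ b - φ a) - ∫ u in a..b, (s b - s u) * g u := by
        rw [hsplit]; ring
    _ = s b * (φ b - φ a) - ∫ t in a..b, s' t * ∫ u in a..t, g u := by
        rw [integral_mul_integral_eq_integral_integral_mul hab hg
          ((intervalIntegrable_iff_integrableOn_Ioc_of_le hab).1 hs')]
        congr 1
        refine intervalIntegral.integral_congr fun u hu => ?_
        rw [uIcc_of_le hab] at hu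
        simp only [hs'_int u hu]
    _ = s b * (φ b - φ a) - ∫ t in a..b, (s' t * φ t - s' t * φ a) := by
        congr 1
        refine intervalIntegral.integral_congr fun t ht => ?_
        rw [uIcc_of_le hab] at ht
        simp only [hφ t ht]
        ring
    _ = s b * φ b - s a * φ a - ∫ t in a..b, s' t * φ t := by
        rw [intervalIntegral.integral_sub _ (hs'.mul_const _), intervalIntegral.integral_mul_const,
          intervalIntegral.integral_eq_sub_of_hasDerivAt
            (fun t ht => hs t (by rwa [uIcc_of_le hab] at ht)) hs']
        · ring
        · refine hs'.mul_continuousOn ?_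
          rw [uIcc_of_le hab]
          exact (continuousOn_const.add hprim).congr hφ

def wronskian (u u' v v' : ℝ → 𝕜) (t : ℝ) : 𝕜 := u t * v' t - u' t * v t

theorem integral_mul_sub_mul_eq_wronskian_sub (hab : a ≤ b) {f f' f'' s s' s'' : ℝ → 𝕜}
    (hf : ∀ t ∈ Icc a b, HasDerivAt f (f' t) t) (hf'' : IntegrableOn f'' (Ioc a b))
    (hf' : ∀ t ∈ Icc a b, f' t = f' a + ∫ u in a..t, f'' u)
    (hs : ∀ t ∈ Icc a b, HasDerivAt s (s' t) t) (hs' : ∀ t ∈ Icc a b, HasDerivAt s' (s'' t) t)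
    (hs'' : IntervalIntegrable s'' volume a b) :
    ∫ t in a..b, (s t * f'' t - s'' t * f t) = wronskian s s' f f' b - wronskian s s' f f' a := by
  have hf''i : IntervalIntegrable f'' volume a b :=
    (intervalIntegrable_iff_integrableOn_Ioc_of_le hab).2 hf''
  have hf'c : ContinuousOn f' (Icc a b) :=
    (continuousOn_const.add (by simpa only [uIcc_of_le hab] using
      intervalIntegral.continuousOn_primitive_interval' hf''i left_mem_uIcc)).congr hf'
  have hsf'' : IntervalIntegrable (fun t => s t * f'' t) volume a b :=
    hf''i.continuousOn_mul (by rw [uIcc_of_le hab]; exact HasDerivAt.continuousOn hs)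
  have hs''f : IntervalIntegrable (fun t => s'' t * f t) volume a b :=
    hs''.mul_continuousOn (by rw [uIcc_of_le hab]; exact HasDerivAt.continuousOn hf)
  have hparts := intervalIntegral.integral_mul_deriv_eq_deriv_mul
    (fun t ht => hs' t (by rwa [uIcc_of_le hab] at ht))
    (fun t ht => hf t (by rwa [uIcc_of_le hab] at ht))
    hs'' (hf'c.intervalIntegrable_of_Icc hab)
  rw [intervalIntegral.integral_sub hsf'' hs''f,
    integral_mul_deriv_eq_deriv_mul_of_eq_add_integral hab hs
      ((HasDerivAt.continuousOn hs').intervalIntegrable_of_Icc hab) hf'' hf', wronskian, wronskian]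
  linear_combination -hparts

end

theorem SchrodingerSol.exists_deriv_eq_add_integral {q : ℝ → ℂ} {E : ℂ} {y y' : ℝ → ℂ}
    (hy : SchrodingerSol q E y y') : ∃ y'' : ℝ → ℂ, (∀ b, IntegrableOn y'' (Icc 0 b)) ∧
      (∀ a t, 0 ≤ a → a ≤ t → y' t = y' a + ∫ u in a..t, y'' u) ∧
      ∀ᵐ x : ℝ, 0 ≤ x → -y'' x + q x * y x = E * y x := by
  obtain ⟨-, y'', hint, hy', hae⟩ := hy
  refine ⟨y'', hint, fun a t ha hat => ?_, hae⟩
  have hint' : ∀ c, 0 ≤ c → IntervalIntegrable y'' volume 0 c := fun c hc =>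
    (intervalIntegrable_iff_integrableOn_Icc_of_le hc).2 (hint c)
  rw [hy' t (ha.trans hat), hy' a ha,
    ← intervalIntegral.integral_interval_sub_left (hint' t (ha.trans hat)) (hint' a ha)]
  ring

theorem SchrodingerSol.integral_mul_potential_mul_eq_wronskian_sub {q : ℝ → ℂ} {E : ℂ}
    {y y' s s' : ℝ → ℂ} {a b : ℝ} (hy : SchrodingerSol q E y y') (ha : 0 ≤ a) (hab : a ≤ b)
    (hs : ∀ t ∈ Icc a b, HasDerivAt s (s' t) t) (hs' : ∀ t ∈ Icc a b, HasDerivAt s' (-E * s t) t) :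
    ∫ t in a..b, s t * q t * y t = wronskian s s' y y' b - wronskian s s' y y' a := by
  obtain ⟨y'', hy''int, hy', hae⟩ := hy.exists_deriv_eq_add_integral
  have hsc : ContinuousOn s (Icc a b) := HasDerivAt.continuousOn hs
  rw [← integral_mul_sub_mul_eq_wronskian_sub hab (fun t ht => hy.1 t (ha.trans ht.1))
    ((hy''int b).mono_set (Ioc_subset_Icc_self.trans (Icc_subset_Icc_left ha)))
    (fun t ht => hy' a t ha ht.1) hs hs'
    ((continuousOn_const.mul hsc).intervalIntegrable_of_Icc hab)]
  refine intervalIntegral.integral_congr_ae ?_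
  rw [uIoc_of_le hab]
  filter_upwards [hae] with t ht hmem
  linear_combination s t * ht (ha.trans hmem.1.le)

theorem IsJost.deriv_eq_of_one_le {q : ℝ → ℂ} {k : ℂ} {f f' : ℝ → ℂ} (hf : IsJost q k f f')
    {x : ℝ} (hx : 1 ≤ x) : f' x = Complex.I * k * Complex.exp (Complex.I * k * x) := by
  have hexp : HasDerivAt (fun t : ℝ => Complex.exp (Complex.I * k * t))
      (Complex.I * k * Complex.exp (Complex.I * k * x)) x := by
    simpa [mul_comm] using ((hasDerivAt_id x).ofReal_comp.const_mul (Complex.I * k)).cexp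
  exact (uniqueDiffOn_Ici 1 x hx).eq_deriv _ (hf.1.1 x (zero_le_one.trans hx)).hasDerivWithinAt
    (hexp.hasDerivWithinAt.congr (fun t ht => hf.2 t ht) (hf.2 x hx))

theorem hasDerivAt_mul_sub_ofReal (k : ℂ) (x t : ℝ) :
    HasDerivAt (fun t : ℝ => k * (x - t)) (-k) t := by
  simpa using ((hasDerivAt_id t).ofReal_comp.const_sub (x : ℂ)).const_mul k

theorem hasDerivAt_sin_mul_sub_div {k : ℂ} (hk : k ≠ 0) (x t : ℝ) :
    HasDerivAt (fun t : ℝ => Complex.sin (k * (x - t)) / k) (-Complex.cos (k * (x - t))) t := by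
  refine (((Complex.hasDerivAt_sin _).comp t (hasDerivAt_mul_sub_ofReal k x t)).div_const k
    ).congr_deriv ?_
  field_simp

theorem hasDerivAt_neg_cos_mul_sub {k : ℂ} (hk : k ≠ 0) (x t : ℝ) :
    HasDerivAt (fun t : ℝ => -Complex.cos (k * (x - t)))
      (-k ^ 2 * (Complex.sin (k * (x - t)) / k)) t := by
  refine ((Complex.hasDerivAt_cos _).comp t (hasDerivAt_mul_sub_ofReal k x t)).neg.congr_deriv ?_
  field_simp

theorem statement9_general
    (q : ℝ → ℂ)
    (k : ℂ) (hk : k ≠ 0)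
    (f f' : ℝ → ℂ)
    (hf : IsJost q k f f') :
    ∀ x : ℝ, x ∈ Icc (0:ℝ) 1 →
      f x = Complex.exp (Complex.I * (x : ℂ) * k)
        - ∫ t in x..1, (Complex.sin (k * ((x : ℂ) - (t : ℂ))) / k) * q t * f t := by
  rintro x ⟨hx0, hx1⟩
  rw [hf.1.integral_mul_potential_mul_eq_wronskian_sub hx0 hx1
    (fun t _ => hasDerivAt_sin_mul_sub_div hk x t) (fun t _ => hasDerivAt_neg_cos_mul_sub hk x t)]
  simp only [wronskian, hf.2 1 le_rfl, hf.deriv_eq_of_one_le le_rfl, sub_self, mul_zero,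
    Complex.sin_zero, Complex.cos_zero, zero_div, zero_mul, Complex.ofReal_one]
  have hexp : Complex.exp (Complex.I * x * k)
      = Complex.exp (Complex.I * k) * Complex.exp (k * (x - 1) * Complex.I) := by
    rw [← Complex.exp_add]; ring_nf
  rw [hexp, ← Complex.cos_add_sin_I]
  field_simp
  ring

/-- For `x ∈ [0,1]` and `k ≠ 0` the Jost solution satisfies
`f₊(x,k) = e^{ixk} - ∫ₓ¹ (sin(k(x-t))/k) q(t) f₊(t,k) dt`. -/
theorem statement9
    (q : ℝ → ℂ) (hqint : Integrable q)
    (hqsupp : ∀ x : ℝ, x ∉ Icc (0:ℝ) 1 → q x = 0)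
    (k : ℂ) (hk : k ≠ 0)
    (f f' : ℝ → ℂ)
    (hf : IsJost q k f f') :
    ∀ x : ℝ, x ∈ Icc (0:ℝ) 1 →
      f x = Complex.exp (Complex.I * (x : ℂ) * k)
        - ∫ t in x..1, (Complex.sin (k * ((x : ℂ) - (t : ℂ))) / k) * q t * f t :=
  statement9_general q k hk f f' hf
end
end

section
/- Let r > 0 and suppose the Jost function vanishes at −ir, i.e. ψ(−ir) = 0. Then φ(x,ir) = ( ψ(ir)/(2r) )·e^{rx} for all x ≥ 1; in particular ∂ₓφ(1,ir) = r·φ(1,ir). -/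
open MeasureTheory Set
open intervalIntegral

noncomputable section

lemma my_ibp (b : ℝ) (hb : 0 ≤ b) (f f' g : ℝ → ℂ) (c : ℂ)
    (hf : ∀ x ∈ Icc (0:ℝ) b, HasDerivAt f (f' x) x)
    (hf'c : ContinuousOn f' (Icc 0 b))
    (hg : IntegrableOn g (Icc 0 b)) :
    ∫ s in (0:ℝ)..b, (f' s * (c + ∫ t in (0:ℝ)..s, g t) + f s * g s)
      = f b * (c + ∫ t in (0:ℝ)..b, g t) - f 0 * c := by
  have hfc : ContinuousOn f (Icc 0 b) :=
    fun x hx => (hf x hx).continuousAt.continuousWithinAt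
  have hgA : IntegrableOn g (Ioc 0 b) := hg.mono_set Ioc_subset_Icc_self
  have hf'A : IntegrableOn f' (Ioc 0 b) :=
    (hf'c.integrableOn_Icc).mono_set Ioc_subset_Icc_self
  have hPc : ContinuousOn (fun s => ∫ t in Ioc (0:ℝ) s, g t) (Icc 0 b) :=
    intervalIntegral.continuousOn_primitive hg
  -- rewrite interval integrals as set integrals over Ioc
  have hiv : ∀ s : ℝ, 0 ≤ s → (∫ t in (0:ℝ)..s, g t) = ∫ t in Ioc (0:ℝ) s, g t :=
    fun s hs => intervalIntegral.integral_of_le hs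
  rw [intervalIntegral.integral_of_le hb, hiv b hb]
  have hcong : ∀ s ∈ Ioc (0:ℝ) b,
      (f' s * (c + ∫ t in (0:ℝ)..s, g t) + f s * g s)
      = (f' s * c + f' s * (∫ t in Ioc (0:ℝ) s, g t) + f s * g s) := by
    intro s hs
    rw [hiv s hs.1.le]; ring
  rw [setIntegral_congr_fun measurableSet_Ioc hcong]
  -- integrability of the three pieces
  have int1 : IntegrableOn (fun s => f' s * c) (Ioc 0 b) := hf'A.mul_const c
  have int2 : IntegrableOn (fun s => f' s * (∫ t in Ioc (0:ℝ) s, g t)) (Ioc 0 b) := by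
    have : ContinuousOn (fun s => f' s * (∫ t in Ioc (0:ℝ) s, g t)) (Icc 0 b) :=
      hf'c.mul hPc
    exact this.integrableOn_Icc.mono_set Ioc_subset_Icc_self
  have int3 : IntegrableOn (fun s => f s * g s) (Ioc 0 b) := by
    have := IntegrableOn.continuousOn_mul hfc hg isCompact_Icc
    exact this.mono_set Ioc_subset_Icc_self
  have int12 : IntegrableOn (fun s => f' s * c + f' s * ∫ t in Ioc (0:ℝ) s, g t) (Ioc 0 b) :=
    int1.add int2
  rw [integral_add int12 int3, integral_add int1 int2]
  -- FTC pieces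
  have hf'ii : IntervalIntegrable f' volume 0 b := by
    apply ContinuousOn.intervalIntegrable
    rwa [uIcc_of_le hb]
  have ftc : ∀ t ∈ Icc (0:ℝ) b, (∫ s in t..b, f' s) = f b - f t := by
    intro t ht
    refine intervalIntegral.integral_eq_sub_of_hasDerivAt (fun x hx => ?_) ?_
    · rw [uIcc_of_le ht.2] at hx
      exact hf x ⟨le_trans ht.1 hx.1, hx.2⟩
    · exact hf'ii.mono_set (by rw [uIcc_of_le ht.2, uIcc_of_le hb]; exact Icc_subset_Icc ht.1 le_rfl)
  have e1 : (∫ s in Ioc (0:ℝ) b, f' s * c) = (f b - f 0) * c := by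
    rw [MeasureTheory.integral_mul_const, ← intervalIntegral.integral_of_le hb,
      ftc 0 (left_mem_Icc.mpr hb)]
  -- Fubini for the middle piece
  have e2 : (∫ s in Ioc (0:ℝ) b, f' s * (∫ t in Ioc (0:ℝ) s, g t))
      = ∫ t in Ioc (0:ℝ) b, g t * (f b - f t) := by
    set A := Ioc (0:ℝ) b with hA
    set H : ℝ × ℝ → ℂ := fun p => {q : ℝ × ℝ | q.2 ≤ q.1}.indicator (fun q => f' q.1 * g q.2) p
      with hH
    have hmeas : MeasurableSet {q : ℝ × ℝ | q.2 ≤ q.1} :=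
      measurableSet_le measurable_snd measurable_fst
    have hHint : Integrable H ((volume.restrict A).prod (volume.restrict A)) :=
      (hf'A.mul_prod hgA).indicator hmeas
    have swap := MeasureTheory.integral_integral_swap (f := fun s t => H (s, t))
      (μ := volume.restrict A) (ν := volume.restrict A) hHint
    have inner1 : ∀ s ∈ A, (∫ t, H (s, t) ∂(volume.restrict A))
        = f' s * (∫ t in Ioc (0:ℝ) s, g t) := by
      intro s hs
      have : (fun t => H (s, t)) = (Iic s).indicator (fun t => f' s * g t) := by
        funext t
        simp only [hH, indicator, mem_setOf_eq, mem_Iic]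
      rw [this, MeasureTheory.integral_indicator measurableSet_Iic,
        Measure.restrict_restrict measurableSet_Iic]
      have : Iic s ∩ A = Ioc 0 s := by
        rw [hA]
        ext t
        simp only [mem_inter_iff, mem_Iic, mem_Ioc]
        constructor
        · rintro ⟨h1, h2, h3⟩; exact ⟨h2, h1⟩
        · rintro ⟨h1, h2⟩; exact ⟨h2, h1, h2.trans hs.2⟩
      rw [this, MeasureTheory.integral_const_mul]
    have inner2 : ∀ t ∈ A, (∫ s, H (s, t) ∂(volume.restrict A))
        = g t * (f b - f t) := by
      intro t ht
      have : (fun s => H (s, t)) = (Ici t).indicator (fun s => f' s * g t) := by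
        funext s
        simp only [hH, indicator, mem_setOf_eq, mem_Ici]
      rw [this, MeasureTheory.integral_indicator measurableSet_Ici,
        Measure.restrict_restrict measurableSet_Ici]
      have : Ici t ∩ A = Icc t b := by
        rw [hA]; ext s
        simp only [mem_inter_iff, mem_Ici, mem_Ioc, mem_Icc]
        constructor
        · rintro ⟨h1, _, h3⟩; exact ⟨h1, h3⟩
        · rintro ⟨h1, h2⟩; exact ⟨h1, ht.1.trans_le h1, h2⟩
      rw [this, MeasureTheory.integral_mul_const, MeasureTheory.integral_Icc_eq_integral_Ioc,
        ← intervalIntegral.integral_of_le (ht.2), ftc t ⟨ht.1.le, ht.2⟩]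
      ring
    calc (∫ s in A, f' s * (∫ t in Ioc (0:ℝ) s, g t))
        = ∫ s in A, (∫ t, H (s, t) ∂(volume.restrict A)) := by
          refine (setIntegral_congr_fun measurableSet_Ioc (fun s hs => (inner1 s hs).symm))
      _ = ∫ t in A, (∫ s, H (s, t) ∂(volume.restrict A)) := swap
      _ = ∫ t in A, g t * (f b - f t) :=
          setIntegral_congr_fun measurableSet_Ioc inner2
  rw [e1, e2]
  have int4 : IntegrableOn (fun t => g t * f b) (Ioc 0 b) := hgA.mul_const _
  have int5 : IntegrableOn (fun t => g t * f t) (Ioc 0 b) := by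
    have : IntegrableOn (fun t => f t * g t) (Ioc 0 b) := int3
    exact this.congr_fun (fun t _ => mul_comm _ _) measurableSet_Ioc
  have : (∫ t in Ioc (0:ℝ) b, g t * (f b - f t))
      = (∫ t in Ioc (0:ℝ) b, g t) * f b - ∫ t in Ioc (0:ℝ) b, g t * f t := by
    rw [← MeasureTheory.integral_mul_const, ← integral_sub int4 int5]
    congr 1; funext t; ring
  rw [this]
  have : (∫ s in Ioc (0:ℝ) b, f s * g s) = ∫ t in Ioc (0:ℝ) b, g t * f t := by
    congr 1; funext t; ring
  rw [this]
  ring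

lemma deriv_cont {u'' : ℝ → ℂ} (u' : ℝ → ℂ) (x : ℝ)
    (hint : ∀ X : ℝ, IntegrableOn u'' (Icc 0 X))
    (heq : ∀ s : ℝ, 0 ≤ s → u' s = u' 0 + ∫ t in (0:ℝ)..s, u'' t) :
    ContinuousOn u' (Icc 0 x) := by
  have h1 : ContinuousOn (fun s => u' 0 + ∫ t in Ioc (0:ℝ) s, u'' t) (Icc 0 x) :=
    (continuousOn_const).add (intervalIntegral.continuousOn_primitive (hint x))
  refine h1.congr fun s hs => ?_
  rw [heq s hs.1, intervalIntegral.integral_of_le hs.1]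

lemma wronskian_const (Q : ℝ → ℂ) (E : ℂ) (u u' v v' : ℝ → ℂ)
    (hu : SchrodingerSol Q E u u') (hv : SchrodingerSol Q E v v')
    (x : ℝ) (hx : 0 ≤ x) :
    u x * v' x - u' x * v x = u 0 * v' 0 - u' 0 * v 0 := by
  obtain ⟨hud, u'', hu''int, hu'eq, hueq⟩ := hu
  obtain ⟨hvd, v'', hv''int, hv'eq, hveq⟩ := hv
  have hucd : ∀ s ∈ Icc (0:ℝ) x, HasDerivAt u (u' s) s := fun s hs => hud s hs.1
  have hvcd : ∀ s ∈ Icc (0:ℝ) x, HasDerivAt v (v' s) s := fun s hs => hvd s hs.1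
  have hu'c : ContinuousOn u' (Icc 0 x) := deriv_cont u' x hu''int hu'eq
  have hv'c : ContinuousOn v' (Icc 0 x) := deriv_cont v' x hv''int hv'eq
  have I1 := my_ibp x hx u u' v'' (v' 0) hucd hu'c (hv''int x)
  have I2 := my_ibp x hx v v' u'' (u' 0) hvcd hv'c (hu''int x)
  -- replace the primitive by v' / u'
  have hQ1 : ∀ s ∈ Icc (0:ℝ) x, (v' 0 + ∫ t in (0:ℝ)..s, v'' t) = v' s :=
    fun s hs => (hv'eq s hs.1).symm
  have hQ2 : ∀ s ∈ Icc (0:ℝ) x, (u' 0 + ∫ t in (0:ℝ)..s, u'' t) = u' s :=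
    fun s hs => (hu'eq s hs.1).symm
  have hx' : uIcc (0:ℝ) x = Icc 0 x := uIcc_of_le hx
  have I1' : ∫ s in (0:ℝ)..x, (u' s * v' s + u s * v'' s) = u x * v' x - u 0 * v' 0 := by
    rw [← hQ1 x (right_mem_Icc.mpr hx)]
    rw [← I1]
    apply intervalIntegral.integral_congr
    intro s hs
    rw [hx'] at hs
    show u' s * v' s + u s * v'' s = u' s * (v' 0 + ∫ t in (0:ℝ)..s, v'' t) + u s * v'' s
    rw [hQ1 s hs]
  have I2' : ∫ s in (0:ℝ)..x, (v' s * u' s + v s * u'' s) = v x * u' x - v 0 * u' 0 := by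
    rw [← hQ2 x (right_mem_Icc.mpr hx)]
    rw [← I2]
    apply intervalIntegral.integral_congr
    intro s hs
    rw [hx'] at hs
    show v' s * u' s + v s * u'' s = v' s * (u' 0 + ∫ t in (0:ℝ)..s, u'' t) + v s * u'' s
    rw [hQ2 s hs]
  -- integrability facts for splitting
  have hucont : ContinuousOn u (Icc 0 x) := fun s hs => (hucd s hs).continuousAt.continuousWithinAt
  have hvcont : ContinuousOn v (Icc 0 x) := fun s hs => (hvcd s hs).continuousAt.continuousWithinAt
  have j1 : IntervalIntegrable (fun s => u' s * v' s + u s * v'' s) volume 0 x := by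
    rw [intervalIntegrable_iff_integrableOn_Ioc_of_le hx]
    have h : IntegrableOn (fun s => u' s * v' s + u s * v'' s) (Icc 0 x) :=
      ((hu'c.mul hv'c).integrableOn_Icc).add
        (IntegrableOn.continuousOn_mul hucont (hv''int x) isCompact_Icc)
    exact h.mono_set Ioc_subset_Icc_self
  have j2 : IntervalIntegrable (fun s => v' s * u' s + v s * u'' s) volume 0 x := by
    rw [intervalIntegrable_iff_integrableOn_Ioc_of_le hx]
    have h : IntegrableOn (fun s => v' s * u' s + v s * u'' s) (Icc 0 x) :=
      ((hv'c.mul hu'c).integrableOn_Icc).add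
        (IntegrableOn.continuousOn_mul hvcont (hu''int x) isCompact_Icc)
    exact h.mono_set Ioc_subset_Icc_self
  have key : ∫ s in (0:ℝ)..x, ((u' s * v' s + u s * v'' s) - (v' s * u' s + v s * u'' s)) = 0 := by
    rw [intervalIntegral.integral_of_le hx]
    have hzero : ∀ᵐ t : ℝ, t ∈ Ioc (0:ℝ) x →
        ((u' t * v' t + u t * v'' t) - (v' t * u' t + v t * u'' t)) = 0 := by
      filter_upwards [hueq, hveq] with t h1 h2 ht
      have e1 : u'' t = (Q t - E) * u t := by
        have := h1 ht.1.le; linear_combination -this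
      have e2 : v'' t = (Q t - E) * v t := by
        have := h2 ht.1.le; linear_combination -this
      rw [e1, e2]; ring
    rw [setIntegral_congr_ae measurableSet_Ioc hzero]
    simp
  rw [intervalIntegral.integral_sub j1 j2, I1', I2'] at key
  linear_combination key

lemma deriv_of_exp_tail (a : ℂ) (u u' : ℝ → ℂ)
    (hd : ∀ x : ℝ, 0 ≤ x → HasDerivAt u (u' x) x)
    (hexp : ∀ x : ℝ, 1 ≤ x → u x = Complex.exp (a * x)) :
    ∀ x : ℝ, 1 ≤ x → u' x = a * Complex.exp (a * x) := by
  intro x hx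
  have h0 : HasDerivAt (fun y : ℝ => a * (y : ℂ)) a x := by
    simpa using (Complex.ofRealCLM.hasDerivAt (x := x)).const_mul a
  have hE : HasDerivAt (fun y : ℝ => Complex.exp (a * y)) (Complex.exp (a * x) * a) x := h0.cexp
  have h1 : HasDerivWithinAt (fun y : ℝ => Complex.exp (a * y)) (u' x) (Ici 1) x :=
    ((hd x (by linarith)).hasDerivWithinAt).congr
      (fun y hy => (hexp y hy).symm) (hexp x hx).symm
  have e1 := h1.derivWithin (uniqueDiffOn_Ici 1 x hx)
  have e2 := (hE.hasDerivWithinAt (s := Ici 1)).derivWithin (uniqueDiffOn_Ici 1 x hx)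
  rw [← e1, e2, mul_comm]

/-- If `ψ(-ir) = 0` for some `r > 0`, then
`φ(x,ir) = (ψ(ir)/(2r)) e^{rx}` for all `x ≥ 1`; in particular `∂ₓφ(1,ir) = r φ(1,ir)`. -/
theorem statement11
    (q : ℝ → ℝ) (hqint : Integrable q)
    (hqsupp : ∀ x : ℝ, x ∉ Icc (0:ℝ) 1 → q x = 0)
    (r : ℝ) (hr : 0 < r)
    (φ φ' fp fp' fm fm' : ℝ → ℂ)
    (hφ : IsPhi (fun x => (q x : ℂ)) (Complex.I * (r : ℂ)) φ φ')
    (hfp : IsJost (fun x => (q x : ℂ)) (Complex.I * (r : ℂ)) fp fp')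
    (hfm : IsJost (fun x => (q x : ℂ)) (-(Complex.I * (r : ℂ))) fm fm')
    (hzero : fm 0 = 0) :
    (∀ x : ℝ, 1 ≤ x → φ x = fp 0 / (2 * (r : ℂ)) * Complex.exp ((r : ℂ) * (x : ℂ))) ∧
    φ' 1 = (r : ℂ) * φ 1 := by
  obtain ⟨hφS, hφ0, hφ'0⟩ := hφ
  obtain ⟨hfpS, hfpE⟩ := hfp
  obtain ⟨hfmS, hfmE⟩ := hfm
  rw [neg_sq] at hfmS
  have hrC : (r : ℂ) ≠ 0 := Complex.ofReal_ne_zero.mpr hr.ne'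
  have hm : ∀ x : ℝ, 1 ≤ x → fm x = Complex.exp ((r : ℂ) * x) := by
    intro x hx
    rw [hfmE x hx]
    congr 2
    rw [mul_neg, ← mul_assoc, Complex.I_mul_I]; ring
  have hp : ∀ x : ℝ, 1 ≤ x → fp x = Complex.exp (-(r : ℂ) * x) := by
    intro x hx
    rw [hfpE x hx]
    congr 2
    rw [← mul_assoc, Complex.I_mul_I]; ring
  have hm' : ∀ x : ℝ, 1 ≤ x → fm' x = (r : ℂ) * Complex.exp ((r : ℂ) * x) :=
    deriv_of_exp_tail (r : ℂ) fm fm' hfmS.1 hm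
  have hp' : ∀ x : ℝ, 1 ≤ x → fp' x = -(r : ℂ) * Complex.exp (-(r : ℂ) * x) :=
    deriv_of_exp_tail (-(r : ℂ)) fp fp' hfpS.1 hp
  have W1 : ∀ x : ℝ, 0 ≤ x → φ x * fm' x - φ' x * fm x = 0 := by
    intro x hx
    rw [wronskian_const _ _ φ φ' fm fm' hφS hfmS x hx, hφ0, hφ'0, hzero]
    ring
  have W2 : ∀ x : ℝ, 0 ≤ x → φ x * fp' x - φ' x * fp x = -fp 0 := by
    intro x hx
    rw [wronskian_const _ _ φ φ' fp fp' hφS hfpS x hx, hφ0, hφ'0]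
    ring
  have hderiv : ∀ x : ℝ, 1 ≤ x → φ' x = (r : ℂ) * φ x := by
    intro x hx
    have h := W1 x (by linarith)
    rw [hm x hx, hm' x hx] at h
    have h2 : (φ x * (r : ℂ) - φ' x) * Complex.exp ((r : ℂ) * x) = 0 := by
      linear_combination h
    rcases mul_eq_zero.mp h2 with h3 | h3
    · linear_combination -h3
    · exact absurd h3 (Complex.exp_ne_zero _)
  have hval : ∀ x : ℝ, 1 ≤ x → φ x = fp 0 / (2 * (r : ℂ)) * Complex.exp ((r : ℂ) * x) := by
    intro x hx
    have h := W2 x (by linarith)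
    rw [hp x hx, hp' x hx, hderiv x hx] at h
    have hprod : Complex.exp (-(r : ℂ) * x) * Complex.exp ((r : ℂ) * x) = 1 := by
      rw [← Complex.exp_add]; ring_nf; exact Complex.exp_zero
    field_simp
    linear_combination (-(Complex.exp ((r:ℂ) * x))) * h - (2 * (r:ℂ) * φ x) * hprod
  exact ⟨hval, hderiv 1 le_rfl⟩
end
end

section
/- Let r > 0 and suppose ψ(−ir) = 0. Let Λ : [0,1] → ℂ satisfy the variational equation −Λ''(x) + q(x)Λ(x) = −r²Λ(x) + 2ir·φ(x,ir) with Λ(0) = 0 and Λ'(0) = 0 (so Λ is the k-derivative of φ(·,k) at k = ir). Then 2ir·∫₀¹ φ(t,ir)² dt = φ(1,ir)·( r·Λ(1) − Λ'(1) ); equivalently, φ(1,ir)² − 2r·∫₀¹ φ(t,ir)² dt = φ(1,ir)·( φ(1,ir) + i·r·Λ(1) − i·Λ'(1) ). -/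
/-!
Green's identity `W(u,v)(b) - W(u,v)(a) = ∫ₐᵇ (u''v - uv'')` for the Wronskian `W(u,v) = u'v - uv'`
holds when `u', v'` are merely absolutely continuous: integrating by parts against a primitive
of an integrable function is Fubini on the triangle `s ≤ t`.

For `k = ir`, the Jost solution `f₋ = f₊(·,-k)` equals `e^{rx}` on `[1,∞)` and solves the same
equation as `φ`, so `W(f₋,φ)` is constant; as `f₋(0) = φ(0) = 0` it vanishes, and at `x = 1`
this reads `φ'(1) = rφ(1)`. For `φ` and `Λ` the integrand in Green's identity is `2kφ²`, and
`W(φ,Λ)(0) = 0`, so `2ir ∫₀¹ φ² = φ'(1)Λ(1) - φ(1)Λ'(1) = φ(1)(rΛ(1) - Λ'(1))`.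
-/

open MeasureTheory Set

noncomputable section

/-- `Λ` solves the variational equation `-Λ'' + q Λ = k² Λ + 2k φ` on `[0,1]`
with `Λ(0) = Λ'(0) = 0` (so `Λ = ∂φ/∂k`). -/
def VarSol (q : ℝ → ℂ) (k : ℂ) (φ Λ Λ' : ℝ → ℂ) : Prop :=
  (∀ x ∈ Icc (0:ℝ) 1, HasDerivAt Λ (Λ' x) x) ∧
  (∃ Λ'' : ℝ → ℂ,
    IntegrableOn Λ'' (Icc (0:ℝ) 1) ∧
    (∀ x ∈ Icc (0:ℝ) 1, Λ' x = Λ' 0 + ∫ t in (0:ℝ)..x, Λ'' t) ∧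
    (∀ᵐ x : ℝ, x ∈ Icc (0:ℝ) 1 →
      -Λ'' x + q x * Λ x = k ^ 2 * Λ x + 2 * k * φ x)) ∧
  Λ 0 = 0 ∧ Λ' 0 = 0

section IntegrationByParts

variable {𝕜 : Type*} [RCLike 𝕜] {a b : ℝ}

theorem integral_primitive_mul_eq_integral_mul_integral {g w : ℝ → 𝕜} (hab : a ≤ b)
    (hg : IntervalIntegrable g volume a b) (hw : IntervalIntegrable w volume a b) :
    ∫ t in a..b, (∫ s in a..t, g s) * w t = ∫ s in a..b, g s * ∫ t in s..b, w t := by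
  rw [intervalIntegrable_iff_integrableOn_Ioc_of_le hab] at hg hw
  set μ := volume.restrict (Ioc a b)
  have hS : MeasurableSet {p : ℝ × ℝ | p.1 ≤ p.2} := measurableSet_le measurable_fst measurable_snd
  set F : ℝ → ℝ → 𝕜 := fun s t => {p : ℝ × ℝ | p.1 ≤ p.2}.indicator (fun p => g p.1 * w p.2) (s, t)
  have hF : Integrable (Function.uncurry F) (μ.prod μ) := (hg.mul_prod hw).indicator hS
  have inner_fst : ∀ t ∈ Ioc a b, ∫ s, F s t ∂μ = (∫ s in a..t, g s) * w t := by
    intro t ht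
    have : (fun s => F s t) = (Iic t).indicator (fun s => g s * w t) := by
      ext s; by_cases h : s ≤ t <;> simp [F, h]
    rw [this, setIntegral_indicator measurableSet_Iic, Ioc_inter_Iic, min_eq_right ht.2,
      integral_mul_const, intervalIntegral.integral_of_le ht.1.le]
  have inner_snd : ∀ s ∈ Ioc a b, ∫ t, F s t ∂μ = g s * ∫ t in s..b, w t := by
    intro s hs
    have : (fun t => F s t) = (Ici s).indicator (fun t => g s * w t) := by
      ext t; by_cases h : s ≤ t <;> simp [F, h]
    have hdom : Ioc a b ∩ Ici s = Icc s b := by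
      ext t
      exact ⟨fun ⟨⟨_, htb⟩, hst⟩ => ⟨hst, htb⟩, fun ⟨hst, htb⟩ => ⟨⟨hs.1.trans_le hst, htb⟩, hst⟩⟩
    rw [this, setIntegral_indicator measurableSet_Ici, hdom, integral_const_mul,
      intervalIntegral.integral_of_le hs.2, integral_Icc_eq_integral_Ioc]
  rw [intervalIntegral.integral_of_le hab, intervalIntegral.integral_of_le hab,
    ← setIntegral_congr_fun measurableSet_Ioc inner_fst,
    ← setIntegral_congr_fun measurableSet_Ioc inner_snd]
  exact (integral_integral_swap hF).symm

theorem continuousOn_of_eq_primitive {f f' : ℝ → 𝕜} (hf' : IntegrableOn f' (Icc a b))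
    (hf : ∀ x ∈ Icc a b, f x = f a + ∫ t in a..x, f' t) : ContinuousOn f (Icc a b) := by
  rcases le_or_gt a b with hab | hba
  · rw [← uIcc_of_le hab] at hf' ⊢
    exact (continuousOn_const.add (intervalIntegral.continuousOn_primitive_interval hf')).congr
      (by rwa [uIcc_of_le hab])
  · rw [Icc_eq_empty_of_lt hba]; exact continuousOn_empty _

theorem integral_deriv_mul_eq_sub_of_eq_primitive {f f' g g' : ℝ → 𝕜} (hab : a ≤ b)
    (hf' : IntegrableOn f' (Icc a b)) (hf : ∀ x ∈ Icc a b, f x = f a + ∫ t in a..x, f' t)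
    (hg : ∀ x ∈ Icc a b, HasDerivAt g (g' x) x) (hg' : ContinuousOn g' (Icc a b)) :
    ∫ x in a..b, f' x * g x = f b * g b - f a * g a - ∫ x in a..b, f x * g' x := by
  have hIcc : uIcc a b = Icc a b := uIcc_of_le hab
  have hgc : ContinuousOn g (Icc a b) := fun x hx => (hg x hx).continuousAt.continuousWithinAt
  have hfc := continuousOn_of_eq_primitive hf' hf
  have hf'i : IntervalIntegrable f' volume a b := (hIcc ▸ hf').intervalIntegrable
  have hg'i : IntervalIntegrable g' volume a b := (hIcc ▸ hg').intervalIntegrable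
  have hfg' : IntervalIntegrable (fun x => f x * g' x) volume a b :=
    (hIcc ▸ hfc.mul hg').intervalIntegrable
  have hf'g : IntervalIntegrable (fun x => f' x * g x) volume a b :=
    (hIcc ▸ hf'.mul_continuousOn hgc isCompact_Icc).intervalIntegrable
  have ftc : ∀ s ∈ Icc a b, ∫ t in s..b, g' t = g b - g s := fun s hs =>
    intervalIntegral.integral_eq_sub_of_hasDerivAt
      (fun x hx => hg x (Icc_subset_Icc hs.1 le_rfl (by rwa [uIcc_of_le hs.2] at hx)))
      (hg'i.mono_set (by rw [hIcc, uIcc_of_le hs.2]; exact Icc_subset_Icc hs.1 le_rfl))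
  have lhs : ∫ t in a..b, (∫ s in a..t, f' s) * g' t
      = (∫ x in a..b, f x * g' x) - f a * (g b - g a) := by
    rw [← ftc a (left_mem_Icc.2 hab), ← intervalIntegral.integral_const_mul,
      ← intervalIntegral.integral_sub hfg' (hg'i.const_mul _)]
    refine intervalIntegral.integral_congr fun t ht => ?_
    simp only [hf t (hIcc ▸ ht)]
    ring
  have rhs : ∫ s in a..b, f' s * ∫ t in s..b, g' t
      = (f b - f a) * g b - ∫ x in a..b, f' x * g x := by
    rw [show f b - f a = ∫ s in a..b, f' s by rw [hf b (right_mem_Icc.2 hab)]; ring,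
      ← intervalIntegral.integral_mul_const,
      ← intervalIntegral.integral_sub (hf'i.mul_const _) hf'g]
    refine intervalIntegral.integral_congr fun s hs => ?_
    simp only [ftc s (hIcc ▸ hs)]
    ring
  have := integral_primitive_mul_eq_integral_mul_integral hab hf'i hg'i
  rw [lhs, rhs] at this
  linear_combination this

theorem integral_mul_sub_mul_eq_wronskian_sub_s12 {u u' u'' v v' v'' : ℝ → 𝕜} (hab : a ≤ b)
    (hu : ∀ x ∈ Icc a b, HasDerivAt u (u' x) x) (hu'' : IntegrableOn u'' (Icc a b))
    (hu' : ∀ x ∈ Icc a b, u' x = u' a + ∫ t in a..x, u'' t)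
    (hv : ∀ x ∈ Icc a b, HasDerivAt v (v' x) x) (hv'' : IntegrableOn v'' (Icc a b))
    (hv' : ∀ x ∈ Icc a b, v' x = v' a + ∫ t in a..x, v'' t) :
    ∫ x in a..b, (u'' x * v x - u x * v'' x)
      = (u' b * v b - u b * v' b) - (u' a * v a - u a * v' a) := by
  have hu''v := integral_deriv_mul_eq_sub_of_eq_primitive hab hu'' hu' hv
    (continuousOn_of_eq_primitive hv'' hv')
  have hv''u := integral_deriv_mul_eq_sub_of_eq_primitive hab hv'' hv' hu
    (continuousOn_of_eq_primitive hu'' hu')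
  have hIcc : uIcc a b = Icc a b := uIcc_of_le hab
  have huc : ContinuousOn u (Icc a b) := fun x hx => (hu x hx).continuousAt.continuousWithinAt
  have hvc : ContinuousOn v (Icc a b) := fun x hx => (hv x hx).continuousAt.continuousWithinAt
  rw [intervalIntegral.integral_sub
    (hIcc ▸ hu''.mul_continuousOn hvc isCompact_Icc).intervalIntegrable
    (hIcc ▸ hv''.continuousOn_mul huc isCompact_Icc).intervalIntegrable]
  simp only [mul_comm (u _) (v'' _)]
  rw [hu''v, hv''u]
  simp only [mul_comm (v' _) (u' _)]
  ring

end IntegrationByParts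

section Schrodinger

open Complex

variable {q : ℝ → ℂ} {k : ℂ}

theorem SchrodingerSol.wronskian_eq {E : ℂ} {u u' v v' : ℝ → ℂ} (hu : SchrodingerSol q E u u')
    (hv : SchrodingerSol q E v v') {x : ℝ} (hx : 0 ≤ x) :
    u' x * v x - u x * v' x = u' 0 * v 0 - u 0 * v' 0 := by
  obtain ⟨hud, u'', hu'', hu', hueq⟩ := hu
  obtain ⟨hvd, v'', hv'', hv', hveq⟩ := hv
  have green := integral_mul_sub_mul_eq_wronskian_sub_s12 hx (fun y hy => hud y hy.1) (hu'' x)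
    (fun y hy => hu' y hy.1) (fun y hy => hvd y hy.1) (hv'' x) (fun y hy => hv' y hy.1)
  have hzero : ∫ y in (0:ℝ)..x, (u'' y * v y - u y * v'' y) = 0 := by
    refine intervalIntegral.integral_zero_ae ?_
    filter_upwards [hueq, hveq] with y hu hv hy
    have hy0 : 0 ≤ y := (uIoc_of_le hx ▸ hy).1.le
    linear_combination u y * hv hy0 - v y * hu hy0
  rw [hzero] at green
  linear_combination -green

theorem IsJost.deriv_one {f f' : ℝ → ℂ} (hf : IsJost q k f f') : f' 1 = I * k * f 1 := by
  have hexp : HasDerivAt (fun x : ℝ => exp (I * k * x)) (exp (I * k * (1:ℝ)) * (I * k * 1)) 1 :=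
    ((hasDerivAt_id (1:ℝ)).ofReal_comp.const_mul (I * k)).cexp
  have hright := (hexp.hasDerivWithinAt (s := Ici 1)).congr (fun x hx => hf.2 x hx) (hf.2 1 le_rfl)
  rw [(uniqueDiffWithinAt_Ici 1).eq_deriv _ ((hf.1.1 1 zero_le_one).hasDerivWithinAt) hright,
    hf.2 1 le_rfl]
  ring

theorem SchrodingerSol.deriv_one_eq_of_isJost_of_eq_zero {φ φ' f f' : ℝ → ℂ}
    (hφ : SchrodingerSol q (k ^ 2) φ φ') (hφ0 : φ 0 = 0) (hf : IsJost q k f f') (hf0 : f 0 = 0) :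
    φ' 1 = I * k * φ 1 := by
  have hW := hf.1.wronskian_eq hφ zero_le_one
  rw [hf.deriv_one, hf0, hφ0] at hW
  have hf1 : f 1 ≠ 0 := by rw [hf.2 1 le_rfl]; exact exp_ne_zero _
  exact mul_left_cancel₀ hf1 (by linear_combination -hW)

theorem VarSol.two_mul_integral_sq {φ φ' Λ Λ' : ℝ → ℂ} (hΛ : VarSol q k φ Λ Λ')
    (hφ : SchrodingerSol q (k ^ 2) φ φ') (hφ0 : φ 0 = 0) :
    2 * k * ∫ x in (0:ℝ)..1, φ x ^ 2 = φ' 1 * Λ 1 - φ 1 * Λ' 1 := by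
  obtain ⟨hΛd, ⟨Λ'', hΛ'', hΛ', hΛeq⟩, hΛ0, -⟩ := hΛ
  obtain ⟨hφd, φ'', hφ'', hφ', hφeq⟩ := hφ
  have green := integral_mul_sub_mul_eq_wronskian_sub_s12 zero_le_one
    (fun y hy => hφd y hy.1) (hφ'' 1) (fun y hy => hφ' y hy.1) hΛd hΛ'' hΛ'
  have hintegrand : ∫ y in (0:ℝ)..1, (φ'' y * Λ y - φ y * Λ'' y)
      = ∫ y in (0:ℝ)..1, 2 * k * φ y ^ 2 := by
    refine intervalIntegral.integral_congr_ae ?_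
    filter_upwards [hφeq, hΛeq] with y hφy hΛy hy
    rw [uIoc_of_le zero_le_one] at hy
    have hy := Ioc_subset_Icc_self hy
    linear_combination φ y * hΛy hy - Λ y * hφy hy.1
  rw [hintegrand, intervalIntegral.integral_const_mul, hΛ0, hφ0] at green
  linear_combination green

end Schrodinger

theorem statement12_general
    (q : ℝ → ℝ)
    (r : ℝ)
    (φ φ' fm fm' Λ Λ' : ℝ → ℂ)
    (hφ : IsPhi (fun x => (q x : ℂ)) (Complex.I * (r : ℂ)) φ φ')
    (hfm : IsJost (fun x => (q x : ℂ)) (-(Complex.I * (r : ℂ))) fm fm')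
    (hzero : fm 0 = 0)
    (hΛ : VarSol (fun x => (q x : ℂ)) (Complex.I * (r : ℂ)) φ Λ Λ') :
    (2 * Complex.I * (r : ℂ) * ∫ t in (0:ℝ)..1, (φ t) ^ 2
        = φ 1 * ((r : ℂ) * Λ 1 - Λ' 1)) ∧
    ((φ 1) ^ 2 - 2 * (r : ℂ) * ∫ t in (0:ℝ)..1, (φ t) ^ 2
        = φ 1 * (φ 1 + Complex.I * (r : ℂ) * Λ 1 - Complex.I * Λ' 1)) := by
  obtain ⟨hφsol, hφ0, -⟩ := hφ
  have hφ'1 : φ' 1 = r * φ 1 := by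
    rw [← neg_sq] at hφsol
    rw [hφsol.deriv_one_eq_of_isJost_of_eq_zero hφ0 hfm hzero]
    linear_combination -(r * φ 1) * Complex.I_sq
  have hgreen := hΛ.two_mul_integral_sq hφsol hφ0
  have hidentity : 2 * Complex.I * r * ∫ t in (0:ℝ)..1, φ t ^ 2 = φ 1 * (r * Λ 1 - Λ' 1) := by
    linear_combination hgreen + Λ 1 * hφ'1
  exact ⟨hidentity, by
    linear_combination Complex.I * hidentity - 2 * r * (∫ t in (0:ℝ)..1, φ t ^ 2) * Complex.I_sq⟩

/-- If `ψ(-ir) = 0` (`r > 0`) and `Λ` is the `k`-derivative of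
`φ(·,k)` at `k = ir`, then `2ir ∫₀¹ φ(t,ir)² dt = φ(1,ir) (r Λ(1) - Λ'(1))`;
equivalently `φ(1,ir)² - 2r ∫₀¹ φ(t,ir)² dt = φ(1,ir)(φ(1,ir) + irΛ(1) - iΛ'(1))`. -/
theorem statement12
    (q : ℝ → ℝ) (hqint : Integrable q)
    (hqsupp : ∀ x : ℝ, x ∉ Icc (0:ℝ) 1 → q x = 0)
    (r : ℝ) (hr : 0 < r)
    (φ φ' fm fm' Λ Λ' : ℝ → ℂ)
    (hφ : IsPhi (fun x => (q x : ℂ)) (Complex.I * (r : ℂ)) φ φ')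
    (hfm : IsJost (fun x => (q x : ℂ)) (-(Complex.I * (r : ℂ))) fm fm')
    (hzero : fm 0 = 0)
    (hΛ : VarSol (fun x => (q x : ℂ)) (Complex.I * (r : ℂ)) φ Λ Λ') :
    (2 * Complex.I * (r : ℂ) * ∫ t in (0:ℝ)..1, (φ t) ^ 2
        = φ 1 * ((r : ℂ) * Λ 1 - Λ' 1)) ∧
    ((φ 1) ^ 2 - 2 * (r : ℂ) * ∫ t in (0:ℝ)..1, (φ t) ^ 2
        = φ 1 * (φ 1 + Complex.I * (r : ℂ) * Λ 1 - Complex.I * Λ' 1)) :=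
  statement12_general q r φ φ' fm fm' Λ Λ' hφ hfm hzero hΛ
end
end
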